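/- Let A ⊆ {1,…,2n} be cyclically convex with |A| ≤ n and let B = {1,…,2n} ∖ A (so that for each 1 ≤ j ≤ n at least one of j, j+n lies in B). Let H ≤ G be the subgroup generated by ⋃_{i∈A}( Ȳ_i ∪ ⋃_{j=1}^{n} ⋃_{j' ∈ {j, j+n} ∩ B} Z̄^j_{i,j'} ). Then for every k ∈ B, the image pr^G_k(H) of H under the k-th coordinate projection equals s^{k*}_k(A_{k*}), the image of the section homomorphism s^{k*}_k : A_{k*} → G_k, where k* is the unique element of {k, k−n} ∩ {1,…,n}. -/

import Mathlib

/-! For `k ∉ A`, every generator of `H` is trivial in coordinate `k` except those of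
`Z̄^{k*}_{i,k}`, whose `k`-th entries `s^{k*}_k(-b)` lie in the section image; and since
`A` is nonempty, choosing any `i ∈ A` these entries exhaust that image. -/

namespace SB

/-- `cc n p` is the 0-based boundary of the `p`-th label sequence:
`cc n p = ⌈p·n/3⌉` for `p ≤ 3`, and `cc n p = n + ⌈(p-3)·n/3⌉` for `p ≥ 3`. -/
def cc (n p : ℕ) : ℕ := if p < 3 then (p * n + 2) / 3 else n + ((p - 3) * n + 2) / 3

/-- The 0-based label sequence `α_{p+1}` (paper's `α_1,…,α_6` for `p = 0,…,5`)
as a finite set of coordinates in `Fin (2n)`. -/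
def alphaF (n p : ℕ) : Finset (Fin (2 * n)) :=
  Finset.univ.filter (fun x => cc n p ≤ x.val ∧ x.val < cc n (p + 1))

/-- The 0-based label sequence `α_{t+1}` (for `t < 3`) as a finite set of
indices in `Fin n` (indexing the factors `A_j`). -/
def alphaN (n t : ℕ) : Finset (Fin n) :=
  Finset.univ.filter (fun x => cc n t ≤ x.val ∧ x.val < cc n (t + 1))

/-- Reduction of a natural number modulo `2n`, as an element of `Fin (2n)`. -/
def idx {n : ℕ} (hn : 0 < n) (k : ℕ) : Fin (2 * n) := ⟨k % (2 * n), Nat.mod_lt _ (by omega)⟩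

/-- Reduction of a natural number modulo `n`, as an element of `Fin n`
(this implements the paper's `j*`). -/
def idxN {n : ℕ} (hn : 0 < n) (k : ℕ) : Fin n := ⟨k % n, Nat.mod_lt _ hn⟩

/-- The set `Ȳ_i` of vectorized kernel generators: `y ∈ Y i` placed in
coordinate `i` with identity elsewhere. -/
def Ybar {n : ℕ} {G : Fin (2 * n) → Type} [∀ i, Group (G i)]
    (Y : ∀ i, Set (G i)) (i : Fin (2 * n)) : Set (∀ i', G i') :=
  Pi.mulSingle i '' (Y i)

/-- The set `Z̄^j_{i,k}` of vectorized section generators: for `b ∈ A j`, the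
element with `s j i b` in coordinate `i`, `s j k b⁻¹` in coordinate `k`, and
identity elsewhere. -/
def Zbar {n : ℕ} {A : Fin n → Type} [∀ j, CommGroup (A j)]
    {G : Fin (2 * n) → Type} [∀ i, Group (G i)]
    (s : ∀ (j : Fin n) (i : Fin (2 * n)), A j →* G i)
    (j : Fin n) (i k : Fin (2 * n)) : Set (∀ i', G i') :=
  Set.range (fun b : A j => Pi.mulSingle i (s j i b) * Pi.mulSingle k (s j k b⁻¹))


section Indices

variable {n : ℕ} (hn : 0 < n)

theorem val_idx_of_lt {k : ℕ} (hk : k < 2 * n) : (idx hn k).val = k :=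
  Nat.mod_eq_of_lt hk

theorem mem_pair_idx_iff (j : Fin n) (k : Fin (2 * n)) :
    k ∈ ({idx hn j.val, idx hn (j.val + n)} : Finset (Fin (2 * n))) ↔ idxN hn k.val = j := by
  have hj := j.isLt
  have hk := k.isLt
  simp only [Finset.mem_insert, Finset.mem_singleton, Fin.ext_iff, idxN,
    val_idx_of_lt hn (show j.val < 2 * n by omega),
    val_idx_of_lt hn (show j.val + n < 2 * n by omega)]
  constructor
  · rintro (h | h)
    · rw [h, Nat.mod_eq_of_lt hj]
    · rw [h, Nat.add_mod_right, Nat.mod_eq_of_lt hj]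
  · intro h
    by_cases hkn : k.val < n
    · rw [Nat.mod_eq_of_lt hkn] at h
      exact Or.inl h
    · rw [Nat.mod_eq_sub_mod (not_lt.1 hkn), Nat.mod_eq_of_lt (by omega)] at h
      omega

end Indices

section VectorGenerators

variable {n : ℕ} {G : Fin (2 * n) → Type} [∀ i, Group (G i)] {i k : Fin (2 * n)}

theorem apply_eq_one_of_mem_Ybar {Y : ∀ i, Set (G i)} {g : ∀ i, G i} (hg : g ∈ Ybar Y i)
    (hki : k ≠ i) : g k = 1 := by
  obtain ⟨y, -, rfl⟩ := hg
  exact Pi.mulSingle_eq_of_ne hki y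

variable {A : Fin n → Type} [∀ j, CommGroup (A j)] {s : ∀ j i, A j →* G i} {j : Fin n}

theorem apply_eq_one_of_mem_Zbar {k' : Fin (2 * n)} {g : ∀ i, G i} (hg : g ∈ Zbar s j i k')
    (hki : k ≠ i) (hkk' : k ≠ k') : g k = 1 := by
  obtain ⟨b, rfl⟩ := hg
  simp [Pi.mulSingle_eq_of_ne hki, Pi.mulSingle_eq_of_ne hkk']

theorem apply_mem_range_of_mem_Zbar {g : ∀ i, G i} (hg : g ∈ Zbar s j i k) (hki : k ≠ i) :
    g k ∈ (s j k).range := by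
  obtain ⟨b, rfl⟩ := hg
  simp [Pi.mulSingle_eq_of_ne hki]

theorem exists_mem_Zbar_apply_eq (hki : k ≠ i) (b : A j) :
    ∃ g ∈ Zbar s j i k, g k = s j k b :=
  ⟨_, ⟨b⁻¹, rfl⟩, by simp [Pi.mulSingle_eq_of_ne hki]⟩

end VectorGenerators

theorem apply_mem_range_of_mem_generators {n : ℕ} (hn : 0 < n) {A : Fin n → Type}
    [∀ j, CommGroup (A j)] {G : Fin (2 * n) → Type} [∀ i, Group (G i)]
    {s : ∀ j i, A j →* G i} {Y : ∀ i, Set (G i)} {Aset : Finset (Fin (2 * n))}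
    {k : Fin (2 * n)} (hk : k ∉ Aset) {g : ∀ i, G i}
    (hg : g ∈ ⋃ i ∈ Aset, (Ybar Y i ∪ ⋃ j : Fin n, ⋃ j' ∈
      (({idx hn j.val, idx hn (j.val + n)} : Finset (Fin (2 * n))) \ Aset), Zbar s j i j')) :
    g k ∈ (s (idxN hn k.val) k).range := by
  simp only [Set.mem_iUnion, Set.mem_union, Finset.mem_sdiff] at hg
  obtain ⟨i, hi, hY | ⟨j, k', ⟨hk'j, -⟩, hZ⟩⟩ := hg
  all_goals have hki : k ≠ i := (ne_of_mem_of_not_mem hi hk).symm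
  · rw [apply_eq_one_of_mem_Ybar hY hki]
    exact one_mem _
  · by_cases hkk' : k = k'
    · subst hkk'
      rw [(mem_pair_idx_iff hn j k).1 hk'j]
      exact apply_mem_range_of_mem_Zbar hZ hki
    · rw [apply_eq_one_of_mem_Zbar hZ hki hkk']
      exact one_mem _

theorem stmt_12
    (n : ℕ) (hn : 3 ≤ n)
    (A : Fin n → Type) [∀ j, CommGroup (A j)]
    (G : Fin (2 * n) → Type) [∀ i, Group (G i)]
    (s : ∀ (j : Fin n) (i : Fin (2 * n)), A j →* G i)
    (Y : ∀ i, Set (G i))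
    (Aset : Finset (Fin (2 * n)))
    (hconv : ∃ (a ℓ : ℕ),
      Aset = (Finset.range (ℓ + 1)).image (fun t => idx (by omega : 0 < n) (a + t))) :
    ∀ k : Fin (2 * n), k ∉ Aset →
      Subgroup.map (Pi.evalMonoidHom G k)
          (Subgroup.closure (⋃ i ∈ Aset,
            (Ybar Y i ∪ ⋃ j : Fin n, ⋃ j' ∈
                (({idx (by omega : 0 < n) j.val, idx (by omega : 0 < n) (j.val + n)} :
                    Finset (Fin (2 * n))) \ Aset),
              Zbar s j i j')))
        = MonoidHom.range (s (idxN (by omega : 0 < n) k.val) k) := by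
  intro k hk
  have hn0 : 0 < n := by omega
  obtain ⟨i₀, hi₀⟩ : Aset.Nonempty := by
    obtain ⟨a, ℓ, rfl⟩ := hconv
    exact Finset.nonempty_range_add_one.image _
  rw [MonoidHom.map_closure]
  apply le_antisymm
  · rw [Subgroup.closure_le]
    rintro _ ⟨g, hg, rfl⟩
    exact apply_mem_range_of_mem_generators hn0 hk hg
  · rintro _ ⟨b, rfl⟩
    obtain ⟨g, hg, hgk⟩ :=
      exists_mem_Zbar_apply_eq (s := s) (ne_of_mem_of_not_mem hi₀ hk).symm b
    refine Subgroup.subset_closure ⟨g, ?_, hgk⟩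
    simp only [Set.mem_iUnion, Set.mem_union, Finset.mem_sdiff]
    exact ⟨i₀, hi₀, Or.inr ⟨_, k, ⟨(mem_pair_idx_iff hn0 _ k).2 rfl, hk⟩, hg⟩⟩

end SB
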